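/- arXiv:0903.1425 — 3 statements merged into one kernel-verified Lean document; each statement's English description precedes it below -/
import Mathlib

section
/- Let G be an abelian group and H a subgroup of G. If H admits a Hausdorff group topology with non-trivial finite von Neumann radical, then G admits a Hausdorff group topology with non-trivial finite von Neumann radical (namely, the topology on G in which H with its given topology is an open subgroup). -/
/-!
Give `G` the group topology in which `H`, with its given topology, is an open subgroup. As `H` is
open, a character of `G` is continuous as soon as its restriction to `H` is. Hence the characters
of `G ⧸ H`, which separate its points since the circle is divisible, are continuous on `G`, and
`n(G) ⊆ H`; and every continuous character of `H` extends to a continuous character of `G`, again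
by divisibility of the circle. So `n(G) = n(H)`.
-/

/-- The von Neumann radical of a topological abelian group: the intersection of the
kernels of all continuous characters into the circle group `ℝ/ℤ`. -/
noncomputable def vonNeumannRadical (G : Type*) [AddCommGroup G] [TopologicalSpace G] :
    AddSubgroup G :=
  ⨅ χ : ContinuousAddMonoidHom G (AddCircle (1 : ℝ)), χ.toAddMonoidHom.ker

open Filter Set Topology

namespace AddCircle

noncomputable def ratCastHom : AddCircle (1 : ℚ) →+ AddCircle (1 : ℝ) :=
  QuotientAddGroup.map _ _ (Rat.castHom ℝ).toAddMonoidHom <| by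
    rintro x ⟨n, rfl⟩
    exact ⟨n, by simp⟩

lemma ratCastHom_injective : Function.Injective ratCastHom := by
  rw [injective_iff_map_eq_zero]
  intro x hx
  induction x using QuotientAddGroup.induction_on with
  | H q =>
    obtain ⟨n, hn⟩ := (QuotientAddGroup.eq_zero_iff _).1 hx
    refine (QuotientAddGroup.eq_zero_iff _).2 ⟨n, ?_⟩
    exact_mod_cast (show ((n • (1 : ℚ) : ℚ) : ℝ) = q by simpa using hn)

end AddCircle

lemma exists_addMonoidHom_addCircle_apply_ne_zero {A : Type*} [AddCommGroup A] {a : A}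
    (ha : a ≠ 0) : ∃ c : A →+ AddCircle (1 : ℝ), c a ≠ 0 := by
  obtain ⟨c, hc⟩ := CharacterModule.exists_character_apply_ne_zero_of_ne_zero ha
  exact ⟨AddCircle.ratCastHom.comp c,
    (AddCircle.ratCastHom_injective.ne_iff' (map_zero _)).2 hc⟩

lemma AddMonoidHom.continuous_of_continuous_comp_subtype {G K : Type*} [AddGroup G]
    [TopologicalSpace G] [IsTopologicalAddGroup G] [AddMonoid K] [TopologicalSpace K]
    [ContinuousAdd K] {H : AddSubgroup G} [TopologicalSpace H]
    (hH : IsOpenEmbedding ((↑) : H → G)) (χ : G →+ K) (hχ : Continuous (χ.comp H.subtype)) :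
    Continuous χ := by
  refine continuous_of_continuousAt_zero χ ?_
  rw [← H.coe_zero, ← hH.continuousAt_iff]
  exact hχ.continuousAt

section vonNeumannRadical

variable {G : Type*} [AddCommGroup G] [TopologicalSpace G]

lemma mem_vonNeumannRadical {x : G} :
    x ∈ vonNeumannRadical G ↔ ∀ χ : ContinuousAddMonoidHom G (AddCircle (1 : ℝ)), χ x = 0 := by
  simp [vonNeumannRadical, AddSubgroup.mem_iInf, AddMonoidHom.mem_ker]

lemma map_vonNeumannRadical_le {K : Type*} [AddCommGroup K] [TopologicalSpace K] (f : K →+ G)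
    (hf : Continuous f) : (vonNeumannRadical K).map f ≤ vonNeumannRadical G := by
  rintro _ ⟨x, hx, rfl⟩
  rw [SetLike.mem_coe, mem_vonNeumannRadical] at hx
  exact mem_vonNeumannRadical.2 fun χ => hx ⟨χ.toAddMonoidHom.comp f, χ.continuous.comp hf⟩

variable [IsTopologicalAddGroup G] {H : AddSubgroup G} [TopologicalSpace H]

lemma vonNeumannRadical_le_of_isOpenEmbedding (hH : IsOpenEmbedding ((↑) : H → G)) :
    vonNeumannRadical G ≤ H := by
  intro g hg
  by_contra hgH
  obtain ⟨c, hc⟩ := exists_addMonoidHom_addCircle_apply_ne_zero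
    (mt (QuotientAddGroup.eq_zero_iff g).1 hgH)
  let χ := c.comp (QuotientAddGroup.mk' H)
  have hχH : χ.comp H.subtype = 0 := by
    ext h
    simp [χ, (QuotientAddGroup.eq_zero_iff _).2 h.2]
  have hχ : Continuous χ := χ.continuous_of_continuous_comp_subtype hH <| by
    rw [hχH]; exact continuous_const
  exact hc (mem_vonNeumannRadical.1 hg ⟨χ, hχ⟩)

lemma vonNeumannRadical_eq_map_of_isOpenEmbedding (hH : IsOpenEmbedding ((↑) : H → G)) :
    vonNeumannRadical G = (vonNeumannRadical H).map H.subtype := by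
  refine le_antisymm (fun g hg => ?_) (map_vonNeumannRadical_le H.subtype hH.continuous)
  have hgH : g ∈ H := vonNeumannRadical_le_of_isOpenEmbedding hH hg
  refine ⟨⟨g, hgH⟩, mem_vonNeumannRadical.2 fun ψ => ?_, rfl⟩
  obtain ⟨Ψ, hΨ⟩ := (Module.Baer.of_divisible (AddCircle (1 : ℝ))).extension_property_addMonoidHom
    H.subtype Subtype.val_injective ψ.toAddMonoidHom
  have hΨc : Continuous Ψ := Ψ.continuous_of_continuous_comp_subtype hH <| by
    rw [hΨ]; exact ψ.continuous
  rw [← mem_vonNeumannRadical.1 hg ⟨Ψ, hΨc⟩]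
  exact (DFunLike.congr_fun hΨ ⟨g, hgH⟩).symm

end vonNeumannRadical

namespace AddSubgroup

variable {G : Type*} [AddCommGroup G] (H : AddSubgroup G) [TopologicalSpace H]

lemma exists_isTopologicalAddGroup_nhds_zero_eq_map [IsTopologicalAddGroup H] :
    ∃ τ : TopologicalSpace G, @IsTopologicalAddGroup G τ _ ∧
      @nhds G τ 0 = Filter.map ((↑) : H → G) (𝓝 0) := by
  let B : AddGroupFilterBasis G := addGroupFilterBasisOfComm (image ((↑) : H → G) '' (𝓝 0).sets)
    ⟨_, univ, univ_mem, rfl⟩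
    (by
      rintro _ _ ⟨V, hV, rfl⟩ ⟨W, hW, rfl⟩
      exact ⟨_, ⟨V ∩ W, inter_mem hV hW, rfl⟩, (image_inter Subtype.val_injective).le⟩)
    (by
      rintro _ ⟨V, hV, rfl⟩
      exact ⟨0, mem_of_mem_nhds hV, rfl⟩)
    (by
      rintro _ ⟨V, hV, rfl⟩
      obtain ⟨W, hW, hWV⟩ := exists_nhds_zero_half hV
      refine ⟨_, ⟨W, hW, rfl⟩, ?_⟩
      rintro _ ⟨_, ⟨a, ha, rfl⟩, _, ⟨b, hb, rfl⟩, rfl⟩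
      exact ⟨a + b, hWV a ha b hb, rfl⟩)
    (by
      rintro _ ⟨V, hV, rfl⟩
      refine ⟨_, ⟨-V, neg_mem_nhds_zero H hV, rfl⟩, ?_⟩
      rintro _ ⟨a, ha, rfl⟩
      exact ⟨-a, ha, rfl⟩)
  refine ⟨B.topology, B.isTopologicalAddGroup, ?_⟩
  rw [B.nhds_zero_eq]
  ext S
  rw [FilterBasis.mem_filter_iff, Filter.mem_map]
  constructor
  · rintro ⟨_, ⟨V, hV, rfl⟩, hVS⟩
    exact mem_of_superset hV fun a ha => hVS ⟨a, ha, rfl⟩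
  · intro hS
    exact ⟨_, ⟨_, hS, rfl⟩, image_preimage_subset _ S⟩

variable [TopologicalSpace G] [IsTopologicalAddGroup G] {H}

lemma isOpenEmbedding_subtype_of_nhds_zero_eq_map [IsTopologicalAddGroup H]
    (h : 𝓝 (0 : G) = Filter.map ((↑) : H → G) (𝓝 0)) : IsOpenEmbedding ((↑) : H → G) := by
  refine .of_isEmbedding_isOpenMap ⟨?_, Subtype.val_injective⟩ ?_
  · refine (IsTopologicalAddGroup.isInducing_iff_nhds_zero (f := H.subtype)).2 ?_
    rw [coe_subtype, h, comap_map Subtype.val_injective]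
  · exact (IsTopologicalAddGroup.isOpenMap_iff_nhds_zero (f := H.subtype)).2 h.le

lemma t2Space_of_nhds_zero_eq_map [T2Space H] (h : 𝓝 (0 : G) = Filter.map ((↑) : H → G) (𝓝 0)) :
    T2Space G := by
  refine IsTopologicalAddGroup.t2Space_of_zero_sep fun g hg => ⟨{g}ᶜ, ?_, by simp⟩
  rw [h, Filter.mem_map, preimage_compl]
  -- `{g}ᶜ` pulls back to the complement of at most one point of `H`.
  refine (Set.Subsingleton.isClosed ?_).isOpen_compl.mem_nhds (by simpa using hg.symm)
  exact fun a ha b hb => Subtype.val_injective (ha.trans hb.symm)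

end AddSubgroup

/-- If a subgroup `H` of an abelian group `G` admits a Hausdorff group topology with
non-trivial finite von Neumann radical, then so does `G`. -/
theorem statement5 (G : Type*) [AddCommGroup G] (H : AddSubgroup G)
    (hH : ∃ τ : TopologicalSpace H, @IsTopologicalAddGroup H τ _ ∧ @T2Space H τ ∧
        @vonNeumannRadical H _ τ ≠ ⊥ ∧ (@vonNeumannRadical H _ τ : Set H).Finite) :
    ∃ τ : TopologicalSpace G, @IsTopologicalAddGroup G τ _ ∧ @T2Space G τ ∧
      @vonNeumannRadical G _ τ ≠ ⊥ ∧ (@vonNeumannRadical G _ τ : Set G).Finite := by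
  obtain ⟨τH, _, _, hne, hfin⟩ := hH
  obtain ⟨τG, _, hnhds⟩ := H.exists_isTopologicalAddGroup_nhds_zero_eq_map
  have hrad := vonNeumannRadical_eq_map_of_isOpenEmbedding
    (AddSubgroup.isOpenEmbedding_subtype_of_nhds_zero_eq_map hnhds)
  refine ⟨τG, inferInstance, AddSubgroup.t2Space_of_nhds_zero_eq_map hnhds, ?_, ?_⟩
  · rwa [hrad, Ne, AddSubgroup.map_eq_bot_iff_of_injective _ H.subtype_injective]
  · rw [hrad, AddSubgroup.coe_map]
    exact hfin.image _
end

section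
/- Let p be a prime and f_n = Σ_{i=0}^{n} p^{n³ − i·n} for n ≥ 1. Let ι : ℤ/pℤ → ℝ/ℤ be the embedding sending the class of k to k/p (mod 1). Then for ω ∈ ℤ/pℤ and x in the circle group 𝕋 = ℝ/ℤ, the two conditions (i) p^n • x → 0 in 𝕋 as n → ∞ and (ii) ι(ω) + f_n • x → 0 in 𝕋 as n → ∞ hold simultaneously if and only if ω = 0 and x is a p-power torsion element of 𝕋 (i.e., there exists k ≥ 0 with p^k • x = 0). In other words, the subgroup of (ℤ/pℤ) × 𝕋 characterized by the sequence d (with d_{2n−1} = (1, f_n), d_{2n} = (0, p^n)) is {0} × ℤ(p^∞). -/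
/-!
Near `0` the circle is isometric to an interval of `ℝ`, so multiplication by `p` scales norms by
exactly `p` there. If `p ^ n • x → 0`, the norms `‖p ^ n • x‖` are therefore eventually
nondecreasing while tending to `0`, hence eventually `0`: `x` is `p`-power torsion. For such an `x`
every term `p ^ (n³ - i n)` of `fseq p n` kills `x` once `n` is large, so `ι(ω) + fseq p n • x` is
eventually the constant `ι(ω)`, which must then vanish.
-/

/-- `f p n = ∑_{i=0}^{n} p^(n³ - i·n)`. -/
def fseq (p : ℕ) (n : ℕ) : ℤ := ∑ i ∈ Finset.range (n + 1), (p : ℤ) ^ (n ^ 3 - i * n)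

/-- The embedding `ℤ/pℤ → ℝ/ℤ` sending the class of `k` to `k/p (mod 1)`. -/
noncomputable def iotaZMod (p : ℕ) (ω : ZMod p) : AddCircle (1 : ℝ) :=
  (((ω.val : ℝ) / p : ℝ) : AddCircle (1 : ℝ))

open Filter Topology

namespace AddCircle

variable {T : ℝ}

theorem exists_coe_eq_and_abs_eq_norm (x : AddCircle T) :
    ∃ r : ℝ, (r : AddCircle T) = x ∧ |r| = ‖x‖ := by
  induction x using QuotientAddGroup.induction_on with
  | H t =>
    refine ⟨t - round (T⁻¹ * t) * T, ?_, norm_eq T ▸ rfl⟩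
    rw [coe_sub, sub_eq_self, coe_eq_zero_iff]
    exact ⟨round (T⁻¹ * t), zsmul_eq_mul _ _⟩

theorem norm_natCast_zsmul_of_norm_le (hT : T ≠ 0) {m : ℕ} {x : AddCircle T}
    (hx : ‖x‖ ≤ |T| / (2 * m)) : ‖(m : ℤ) • x‖ = m * ‖x‖ := by
  obtain ⟨r, rfl, hr⟩ := exists_coe_eq_and_abs_eq_norm x
  have hmr : |(m : ℝ) * r| = m * ‖(r : AddCircle T)‖ := by
    rw [abs_mul, Nat.abs_cast, hr]
  rw [← coe_zsmul, zsmul_eq_mul, Int.cast_natCast, ← hmr, norm_coe_eq_abs_iff _ hT, hmr]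
  rcases m.eq_zero_or_pos with rfl | hm
  · rw [Nat.cast_zero, zero_mul]
    positivity
  · rw [le_div_iff₀ (by positivity)] at hx
    nlinarith

theorem exists_pow_zsmul_eq_zero_of_tendsto (hT : T ≠ 0) {m : ℕ} (hm : 1 ≤ m)
    {x : AddCircle T} (h : Tendsto (fun n : ℕ => (m : ℤ) ^ n • x) atTop (𝓝 0)) :
    ∃ k : ℕ, (m : ℤ) ^ k • x = 0 := by
  set a : ℕ → ℝ := fun n => ‖(m : ℤ) ^ n • x‖
  have ha_lim : Tendsto a atTop (𝓝 0) := by simpa using h.norm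
  have hsmall : ∀ᶠ n in atTop, a n ≤ |T| / (2 * m) :=
    ha_lim.eventually (ge_mem_nhds (by positivity))
  obtain ⟨N, hN⟩ := hsmall.exists_forall_of_atTop
  have hstep : ∀ n ≥ N, a n ≤ a (n + 1) := fun n hn => by
    show ‖(m : ℤ) ^ n • x‖ ≤ ‖(m : ℤ) ^ (n + 1) • x‖
    rw [pow_succ', mul_smul, norm_natCast_zsmul_of_norm_le hT (hN n hn)]
    exact le_mul_of_one_le_left (norm_nonneg _) (by exact_mod_cast hm)
  have hmono : ∀ n ≥ N, a N ≤ a n := fun n hn => by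
    induction n, hn using Nat.le_induction with
    | base => exact le_rfl
    | succ n hn ih => exact ih.trans (hstep n hn)
  have haN : a N ≤ 0 := ge_of_tendsto ha_lim (eventually_atTop.2 ⟨N, hmono⟩)
  exact ⟨N, norm_le_zero_iff.1 haN⟩

end AddCircle

theorem iotaZMod_eq_zero_iff {p : ℕ} [NeZero p] {ω : ZMod p} : iotaZMod p ω = 0 ↔ ω = 0 := by
  have hp : (0 : ℝ) < p := by exact_mod_cast NeZero.pos p
  have hmem : (ω.val : ℝ) / p ∈ Set.Ico 0 1 :=
    ⟨by positivity, (div_lt_one hp).2 (by exact_mod_cast ω.val_lt)⟩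
  rw [iotaZMod, AddCircle.coe_eq_zero_iff_of_mem_Ico hmem, div_eq_zero_iff, or_iff_left hp.ne',
    Nat.cast_eq_zero, ZMod.val_eq_zero]

theorem pow_dvd_fseq (p : ℕ) {k n : ℕ} (hkn : k < n) : (p : ℤ) ^ k ∣ fseq p n := by
  refine Finset.dvd_sum fun i hi => pow_dvd_pow _ ?_
  have hin : i * n ≤ n * n := Nat.mul_le_mul_right n (Nat.lt_succ_iff.1 (Finset.mem_range.1 hi))
  have hn : 0 < n * n := Nat.mul_pos (by omega) (by omega)
  have hcube : k + n * n ≤ n ^ 3 := by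
    nlinarith [Nat.mul_le_mul_left (n * n) hkn, Nat.le_mul_of_pos_left k hn]
  omega

theorem eventually_fseq_zsmul_eq_zero {G : Type*} [AddCommGroup G] {p k : ℕ} {x : G}
    (hx : (p : ℤ) ^ k • x = 0) : ∀ᶠ n in atTop, fseq p n • x = 0 := by
  filter_upwards [eventually_gt_atTop k] with n hn
  exact addOrderOf_dvd_iff_zsmul_eq_zero.1
    ((addOrderOf_dvd_iff_zsmul_eq_zero.2 hx).trans (pow_dvd_fseq p hn))

/-- For `ω ∈ ℤ/pℤ` and `x ∈ 𝕋 = ℝ/ℤ`: `p^n • x → 0` and `ι(ω) + f p n • x → 0` hold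
simultaneously iff `ω = 0` and `x` is `p`-power torsion.  That is, the subgroup of
`(ℤ/pℤ) × 𝕋` characterized by the sequence `d` (with `d (2n-1) = (1, f p n)`,
`d (2n) = (0, p^n)`) is `{0} × ℤ(p^∞)`. -/
theorem statement8 (p : ℕ) (hp : p.Prime) (ω : ZMod p) (x : AddCircle (1 : ℝ)) :
    (Filter.Tendsto (fun n : ℕ => (p : ℤ) ^ n • x) Filter.atTop (nhds 0) ∧
        Filter.Tendsto (fun n : ℕ => iotaZMod p ω + fseq p n • x) Filter.atTop (nhds 0)) ↔
      (ω = 0 ∧ ∃ k : ℕ, (p : ℤ) ^ k • x = 0) := by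
  have : NeZero p := ⟨hp.ne_zero⟩
  constructor
  · rintro ⟨hpow, hf⟩
    obtain ⟨k, hk⟩ := AddCircle.exists_pow_zsmul_eq_zero_of_tendsto one_ne_zero hp.one_lt.le hpow
    have hι : Tendsto (fun _ : ℕ => iotaZMod p ω) atTop (𝓝 0) :=
      hf.congr' ((eventually_fseq_zsmul_eq_zero hk).mono fun n hn => by rw [hn, add_zero])
    exact ⟨iotaZMod_eq_zero_iff.1 (tendsto_const_nhds_iff.1 hι), k, hk⟩
  · rintro ⟨rfl, k, hk⟩
    refine ⟨tendsto_nhds_of_eventually_eq ?_, tendsto_nhds_of_eventually_eq ?_⟩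
    · filter_upwards [eventually_ge_atTop k] with n hn
      obtain ⟨j, rfl⟩ := Nat.exists_eq_add_of_le hn
      rw [pow_add, mul_comm, mul_smul, hk, smul_zero]
    · filter_upwards [eventually_fseq_zsmul_eq_zero hk] with n hn
      rw [hn, add_zero, iotaZMod_eq_zero_iff]
end

section
/- Let γ ≥ 1 and q > 1 be positive integers. Define the sequence d in ℤ by d_{2n−1} = γ + Σ_{i=0}^{n} q^{n³ − i·n} = γ + q^{n³−n²} + ⋯ + q^{n³−2n} + q^{n³−n} + q^{n³} and d_{2n} = q^n, for n ≥ 1. Then d is a T-sequence in ℤ: there exists a Hausdorff group topology on ℤ in which d_n converges to zero. -/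
/-- The sequence `d` in `ℤ`: `d (2n-1) = γ + ∑_{i=0}^{n} q^(n³ - i·n)` and
`d (2n) = q^n`. -/
def dZ (γ q : ℕ) : ℕ → ℤ := fun k =>
  if k % 2 = 1 then
    (γ : ℤ) + ∑ i ∈ Finset.range ((k + 1) / 2 + 1), (q : ℤ) ^ (((k + 1) / 2) ^ 3 - i * ((k + 1) / 2))
  else (q : ℤ) ^ (k / 2)

/-!
A sequence `u` in an abelian group is a T-sequence as soon as every `g ≠ 0` avoids one of the sets
`⋃ m, D (f 0) + ⋯ + D (f (m - 1))`, where `D k = {0} ∪ {±u n | n ≥ k}` and `f` is strictly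
increasing (Protasov–Zelenyuk): these sets form a basis at zero of a Hausdorff group topology in
which `u n → 0`.

For `d` and `g ≠ 0` take `f i = 2K (i + 1)⁶` with `K = γ + |g| + 6`, and write
`g = ∑ εᵢ d (kᵢ)` with `|εᵢ| ≤ 1`, `kᵢ ≥ f i`. Collecting the odd terms by level, `g` is
`∑ c_v (γ + T v)` plus signed powers `q ^ αᵢ`, where `T v = ∑_{j ≤ v} q^(v³ - j v)`. If every `c_v`
vanishes, `q ^ K ∣ g` while `|g| < q ^ K`. Otherwise let `n ≥ K` be the top level with `c_n ≠ 0`.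
Sparseness of `f` leaves at most `√n ≤ n / 2` indices with `kᵢ ≤ 4 n³`; this bounds the total
coefficient `∑ |c_v|` and the number of small even exponents `αᵢ`. The `n + 1` exponents `n l` of
`T n` are spaced `n` apart and each `αᵢ` comes within `n` of at most two of them, so some `e = n l`
is at distance at least `n` from all of them. Modulo `q ^ (e + n)`, the representation then says
that `c_n q ^ e` is within `(n + 1)² q ^ (e - n) < q ^ e` of a multiple of `q ^ (e + n)`, which
forces `c_n = 0`.
-/

open Finset Filter Topology Pointwise

lemma sum_range_two_mul {M : Type*} [AddCommMonoid M] (F : ℕ → M) (n : ℕ) :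
    ∑ j ∈ range (2 * n), F j = ∑ i ∈ range n, (F (2 * i) + F (2 * i + 1)) := by
  induction n with
  | zero => simp
  | succ n ih => rw [show 2 * (n + 1) = 2 * n + 1 + 1 by ring, sum_range_succ, sum_range_succ, ih,
      sum_range_succ, add_assoc]

section TSequence

variable {G : Type*} [AddCommGroup G]

def IsTSequence (u : ℕ → G) : Prop :=
  ∃ τ : TopologicalSpace G, @IsTopologicalAddGroup G τ _ ∧ @T2Space G τ ∧
    Tendsto u atTop (@nhds G τ 0)

def symmTail (u : ℕ → G) (k : ℕ) : Set G :=
  {x | ∃ ε : ℤ, |ε| ≤ 1 ∧ ∃ n, k ≤ n ∧ ε • u n = x}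

def tailSums (u : ℕ → G) (f : ℕ → ℕ) : Set G :=
  ⋃ m, ∑ i ∈ range m, symmTail u (f i)

variable {u : ℕ → G}

lemma zero_mem_symmTail (k : ℕ) : (0 : G) ∈ symmTail u k :=
  ⟨0, by simp, k, le_rfl, zero_smul ℤ _⟩

lemma symmTail_anti {k l : ℕ} (h : k ≤ l) : symmTail u l ⊆ symmTail u k := by
  rintro x ⟨ε, hε, n, hn, rfl⟩
  exact ⟨ε, hε, n, h.trans hn, rfl⟩

lemma neg_symmTail (k : ℕ) : -symmTail u k = symmTail u k := by
  ext x
  rw [Set.mem_neg]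
  constructor
  · rintro ⟨ε, hε, n, hn, hx⟩
    exact ⟨-ε, by rwa [abs_neg], n, hn, by rw [neg_smul, hx, neg_neg]⟩
  · rintro ⟨ε, hε, n, hn, rfl⟩
    exact ⟨-ε, by rwa [abs_neg], n, hn, neg_smul ε (u n)⟩

lemma sum_range_symmTail_mono (f : ℕ → ℕ) {m M : ℕ} (h : m ≤ M) :
    ∑ i ∈ range m, symmTail u (f i) ⊆ ∑ i ∈ range M, symmTail u (f i) := by
  rw [← sum_range_add_sum_Ico _ h]
  refine Set.subset_add_left _ ?_
  simpa using Set.finsetSum_mem_finsetSum (Ico m M) (fun i => symmTail u (f i)) 0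
    fun i _ => zero_mem_symmTail (f i)

lemma zero_mem_tailSums (f : ℕ → ℕ) : (0 : G) ∈ tailSums u f :=
  Set.mem_iUnion.2 ⟨0, by simp⟩

lemma mem_tailSums_of_le {f : ℕ → ℕ} {n : ℕ} (h : f 0 ≤ n) : u n ∈ tailSums u f :=
  Set.mem_iUnion.2 ⟨1, by simpa using ⟨1, le_rfl, n, h, one_smul ℤ (u n)⟩⟩

lemma tailSums_anti {f g : ℕ → ℕ} (h : ∀ i, f i ≤ g i) : tailSums u g ⊆ tailSums u f :=
  Set.iUnion_mono fun _ => Set.finsetSum_subset_finsetSum _ _ _ fun i _ => symmTail_anti (h i)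

lemma neg_tailSums (f : ℕ → ℕ) : -tailSums u f = tailSums u f := by
  simp only [tailSums, Set.iUnion_neg, ← sum_neg_distrib, neg_symmTail]

lemma tailSums_add_tailSums {f : ℕ → ℕ} (hf : Monotone f) :
    tailSums u (fun i => f (2 * i + 1)) + tailSums u (fun i => f (2 * i + 1)) ⊆ tailSums u f := by
  rintro _ ⟨x, hx, y, hy, rfl⟩
  obtain ⟨m₁, hx⟩ := Set.mem_iUnion.1 hx
  obtain ⟨m₂, hy⟩ := Set.mem_iUnion.1 hy
  refine Set.mem_iUnion.2 ⟨2 * max m₁ m₂, ?_⟩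
  rw [sum_range_two_mul]
  have hxy : x + y ∈ ∑ i ∈ range (max m₁ m₂),
      (symmTail u (f (2 * i + 1)) + symmTail u (f (2 * i + 1))) := by
    rw [sum_add_distrib]
    exact Set.add_mem_add (sum_range_symmTail_mono _ (le_max_left _ _) hx)
      (sum_range_symmTail_mono _ (le_max_right _ _) hy)
  refine Set.finsetSum_subset_finsetSum _ _ _ (fun i _ => ?_) hxy
  exact Set.add_subset_add (symmTail_anti (hf (Nat.le_succ _))) subset_rfl

abbrev tailSumsBasis (u : ℕ → G) : AddGroupFilterBasis G where
  sets := {U | ∃ f : ℕ → ℕ, StrictMono f ∧ tailSums u f = U}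
  nonempty := ⟨_, id, strictMono_id, rfl⟩
  inter_sets := by
    rintro _ _ ⟨f, hf, rfl⟩ ⟨g, hg, rfl⟩
    exact ⟨_, ⟨fun i => max (f i) (g i), fun a b h => max_lt_max (hf h) (hg h), rfl⟩,
      Set.subset_inter (tailSums_anti fun i => le_max_left _ _)
        (tailSums_anti fun i => le_max_right _ _)⟩
  zero' := by
    rintro _ ⟨f, -, rfl⟩
    exact zero_mem_tailSums f
  add' := by
    rintro _ ⟨f, hf, rfl⟩
    exact ⟨_, ⟨fun i => f (2 * i + 1), hf.comp fun a b h => by omega, rfl⟩,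
      tailSums_add_tailSums hf.monotone⟩
  neg' := by
    rintro _ ⟨f, hf, rfl⟩
    exact ⟨_, ⟨f, hf, rfl⟩, fun x hx => by rwa [Set.mem_preimage, ← Set.mem_neg, neg_tailSums]⟩
  conj' := by
    rintro x₀ _ ⟨f, hf, rfl⟩
    exact ⟨_, ⟨f, hf, rfl⟩, fun x hx => by rwa [Set.mem_preimage, add_neg_cancel_comm]⟩

theorem isTSequence_of_forall_notMem_tailSums
    (h : ∀ g ≠ (0 : G), ∃ f, StrictMono f ∧ g ∉ tailSums u f) : IsTSequence u := by
  let := (tailSumsBasis u).topology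
  have := (tailSumsBasis u).isTopologicalAddGroup
  refine ⟨_, inferInstance, IsTopologicalAddGroup.t2Space_of_zero_sep fun g hg => ?_, ?_⟩
  · obtain ⟨f, hf, hg⟩ := h g hg
    exact ⟨_, (tailSumsBasis u).mem_nhds_zero ⟨f, hf, rfl⟩, hg⟩
  · rw [(tailSumsBasis u).nhds_zero_hasBasis.tendsto_right_iff]
    rintro _ ⟨f, -, rfl⟩
    filter_upwards [eventually_ge_atTop (f 0)] with n hn
    exact mem_tailSums_of_le hn

lemma exists_sum_zsmul_of_mem_tailSums {f : ℕ → ℕ} {x : G} (hx : x ∈ tailSums u f) :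
    ∃ m, ∃ (ε : ℕ → ℤ) (k : ℕ → ℕ), (∀ i ∈ range m, |ε i| ≤ 1 ∧ f i ≤ k i) ∧
      x = ∑ i ∈ range m, ε i • u (k i) := by
  obtain ⟨m, hx⟩ := Set.mem_iUnion.1 hx
  obtain ⟨z, hz, rfl⟩ := (Set.mem_finsetSum _ _ _).1 hx
  choose! ε hε k hk hzk using fun i (hi : i ∈ range m) => hz hi
  exact ⟨m, ε, k, fun i hi => ⟨hε i hi, hk i hi⟩, sum_congr rfl fun i hi => (hzk i hi).symm⟩

end TSequence

def NearMultiple (b M y : ℤ) : Prop := ∃ x, b ∣ x ∧ |y - x| ≤ M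

namespace NearMultiple

variable {b M N y z : ℤ}

lemma of_abs_le (h : |y| ≤ M) : NearMultiple b M y := ⟨0, dvd_zero b, by rwa [sub_zero]⟩

lemma mono (h : NearMultiple b M y) (hMN : M ≤ N) : NearMultiple b N y :=
  let ⟨x, hx, hxy⟩ := h
  ⟨x, hx, hxy.trans hMN⟩

lemma sub (hy : NearMultiple b M y) (hz : NearMultiple b N z) :
    NearMultiple b (M + N) (y - z) := by
  obtain ⟨x, hx, hxy⟩ := hy
  obtain ⟨x', hx', hxz⟩ := hz
  refine ⟨x - x', dvd_sub hx hx', ?_⟩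
  calc |y - z - (x - x')| = |(y - x) - (z - x')| := by ring_nf
    _ ≤ M + N := (abs_sub _ _).trans (add_le_add hxy hxz)

lemma mul_left (c : ℤ) (h : NearMultiple b M y) : NearMultiple b (|c| * M) (c * y) := by
  obtain ⟨x, hx, hxy⟩ := h
  refine ⟨c * x, dvd_mul_of_dvd_right hx c, ?_⟩
  rw [← mul_sub, abs_mul]
  exact mul_le_mul_of_nonneg_left hxy (abs_nonneg c)

lemma eq_zero_of_mul {a c : ℤ} (h : NearMultiple b M (c * a)) (hMa : M < a)
    (hb : |c| * a + M < b) : c = 0 := by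
  obtain ⟨x, hx, hxy⟩ := h
  have ha : 0 < a := (abs_nonneg _).trans_lt (hxy.trans_lt hMa)
  have hx0 : x = 0 := Int.eq_zero_of_abs_lt_dvd hx <| calc
    |x| = |c * a - (c * a - x)| := by ring_nf
    _ ≤ |c * a| + |c * a - x| := abs_sub _ _
    _ < b := by rw [abs_mul, abs_of_pos ha]; linarith
  rw [hx0, sub_zero, abs_mul, abs_of_pos ha] at hxy
  exact Int.abs_lt_one_iff.1 (by nlinarith)

end NearMultiple

lemma nearMultiple_sum_mul_pow {ι : Type*} {q : ℕ} (hq : 1 ≤ q) {e n : ℕ} (s : Finset ι)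
    (w : ι → ℤ) (x : ι → ℕ) (hx : ∀ i ∈ s, x i + n ≤ e ∨ e + n ≤ x i) :
    NearMultiple ((q : ℤ) ^ (e + n)) ((∑ i ∈ s with x i + n ≤ e, |w i|) * (q : ℤ) ^ (e - n))
      (∑ i ∈ s, w i * (q : ℤ) ^ x i) := by
  refine ⟨∑ i ∈ s with ¬ x i + n ≤ e, w i * (q : ℤ) ^ x i, dvd_sum fun i hi => ?_, ?_⟩
  · obtain ⟨hi, hlow⟩ := mem_filter.1 hi
    exact dvd_mul_of_dvd_right (pow_dvd_pow _ ((hx i hi).resolve_left hlow)) _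
  · rw [← sum_filter_add_sum_filter_not s (fun i => x i + n ≤ e), add_sub_cancel_right, sum_mul]
    refine (abs_sum_le_sum_abs _ _).trans (sum_le_sum fun i hi => ?_)
    rw [abs_mul, abs_pow, Nat.abs_cast]
    have hlow := (mem_filter.1 hi).2
    exact mul_le_mul_of_nonneg_left (pow_le_pow_right₀ (by exact_mod_cast hq) (by omega))
      (abs_nonneg _)

lemma eq_or_eq_succ_div_of_lt {n l a : ℕ} (hn : 0 < n) (h₁ : n * l < a + n)
    (h₂ : a < n * l + n) : l = a / n ∨ l = a / n + 1 := by
  have hdiv := Nat.div_add_mod a n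
  have hmod := Nat.mod_lt a hn
  have hl : l < a / n + 2 := Nat.lt_of_mul_lt_mul_left (a := n) (by rw [mul_add]; omega)
  have hl' : a / n < l + 1 := Nat.lt_of_mul_lt_mul_left (a := n) (by rw [mul_add_one]; omega)
  omega

lemma exists_mem_forall_far {n : ℕ} (hn : 0 < n) (A L : Finset ℕ) (hAL : 2 * #A < #L) :
    ∃ l ∈ L, ∀ a ∈ A, a + n ≤ n * l ∨ n * l + n ≤ a := by
  by_contra! h
  have hsub : L ⊆ A.image (· / n) ∪ A.image (· / n + 1) := by
    intro l hl
    obtain ⟨a, ha, h₁, h₂⟩ := h l hl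
    rcases eq_or_eq_succ_div_of_lt hn h₁ h₂ with rfl | rfl
    · exact mem_union_left _ (mem_image_of_mem _ ha)
    · exact mem_union_right _ (mem_image_of_mem (· / n + 1) ha)
  have h₁ := (card_le_card hsub).trans (card_union_le _ _)
  have h₂ := card_image_le (s := A) (f := (· / n))
  have h₃ := card_image_le (s := A) (f := (· / n + 1))
  omega

lemma sum_abs_sum_fiber_le_card {ι κ : Type*} [DecidableEq κ] (s : Finset ι) (t : Finset κ)
    (g : ι → κ) (ε : ι → ℤ) (hε : ∀ i ∈ s, |ε i| ≤ 1) :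
    ∑ j ∈ t, |∑ i ∈ s with g i = j, ε i| ≤ #{i ∈ s | g i ∈ t} := by
  calc ∑ j ∈ t, |∑ i ∈ s with g i = j, ε i|
      ≤ ∑ j ∈ t, ∑ i ∈ s with g i = j, |ε i| := sum_le_sum fun j _ => abs_sum_le_sum_abs _ _
    _ = ∑ i ∈ s with g i ∈ t, |ε i| := sum_fiberwise_eq_sum_filter _ _ _ _
    _ ≤ ∑ i ∈ s with g i ∈ t, 1 := sum_le_sum fun i hi => hε i (mem_filter.1 hi).1
    _ = #{i ∈ s | g i ∈ t} := by simp

lemma succ_sq_lt_pow {q n : ℕ} (hq : 2 ≤ q) (hn : 6 ≤ n) : (n + 1) ^ 2 < q ^ n := by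
  refine lt_of_lt_of_le ?_ (Nat.pow_le_pow_left hq n)
  induction n, hn using Nat.le_induction with
  | base => norm_num
  | succ n hn ih => nlinarith [pow_succ 2 n]

lemma two_mul_card_filter_le {C n : ℕ} (hC : 4 ≤ C) (hn : 4 ≤ n) (s : Finset ℕ) (k : ℕ → ℕ)
    (hk : ∀ i ∈ s, C * (i + 1) ^ 6 ≤ k i) : 2 * #{i ∈ s | k i ≤ 4 * n ^ 3} ≤ n := by
  have hsub : {i ∈ s | k i ≤ 4 * n ^ 3} ⊆ range (Nat.sqrt n) := by
    intro i hi
    obtain ⟨hi, hkn⟩ := mem_filter.1 hi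
    have h4 : 4 * (i + 1) ^ 6 ≤ 4 * n ^ 3 := (Nat.mul_le_mul_right _ hC).trans ((hk i hi).trans hkn)
    have h6 : ((i + 1) ^ 2) ^ 3 ≤ n ^ 3 := by rw [← pow_mul]; norm_num; omega
    exact mem_range.2 (Nat.le_sqrt'.2 (Nat.pow_le_pow_iff_left (by norm_num) |>.1 h6))
  have hs2 : 2 ≤ Nat.sqrt n := Nat.le_sqrt'.2 hn
  have hsn := Nat.sqrt_le' n
  have hcard := (card_le_card hsub).trans_eq (card_range _)
  nlinarith

def blockSum (q n : ℕ) : ℤ := ∑ j ∈ range (n + 1), (q : ℤ) ^ (n ^ 3 - j * n)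

lemma dZ_of_odd {γ q k : ℕ} (hk : k % 2 = 1) : dZ γ q k = γ + blockSum q ((k + 1) / 2) := by
  simp only [dZ, if_pos hk, blockSum]

lemma dZ_of_not_odd {γ q k : ℕ} (hk : ¬ k % 2 = 1) : dZ γ q k = (q : ℤ) ^ (k / 2) := by
  simp only [dZ, if_neg hk]

lemma blockSum_nonneg (q n : ℕ) : 0 ≤ blockSum q n :=
  sum_nonneg fun _ _ => by positivity

lemma blockSum_le {q : ℕ} (hq : 2 ≤ q) (n : ℕ) : blockSum q n ≤ (q : ℤ) ^ (n ^ 3 + n) := by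
  have hq' : (1 : ℤ) ≤ q := by exact_mod_cast one_le_two.trans hq
  calc blockSum q n ≤ ∑ j ∈ range (n + 1), (q : ℤ) ^ (n ^ 3) :=
        sum_le_sum fun j _ => pow_le_pow_right₀ hq' (Nat.sub_le _ _)
    _ = ((n : ℤ) + 1) * (q : ℤ) ^ (n ^ 3) := by simp
    _ ≤ 2 ^ n * (q : ℤ) ^ (n ^ 3) := by gcongr; exact_mod_cast Nat.lt_two_pow_self
    _ ≤ (q : ℤ) ^ n * (q : ℤ) ^ (n ^ 3) := by gcongr; exact_mod_cast hq
    _ = (q : ℤ) ^ (n ^ 3 + n) := by ring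

lemma blockSum_eq_sum_Icc (q n : ℕ) :
    blockSum q n = ∑ l ∈ Icc (n ^ 2 - n) (n ^ 2), (q : ℤ) ^ (n * l) := by
  have hn : n ≤ n ^ 2 := Nat.le_self_pow two_ne_zero n
  refine sum_nbij' (fun j => n ^ 2 - j) (fun l => n ^ 2 - l) (fun j hj => ?_) (fun l hl => ?_)
    (fun j hj => ?_) (fun l hl => ?_) (fun j hj => ?_)
  all_goals simp only [mem_range, mem_Icc] at *
  any_goals omega
  rw [Nat.mul_sub, ← pow_succ', mul_comm j]

lemma nearMultiple_blockSum_sub_pow {q n l : ℕ} (hq : 1 ≤ q) (hl : l ∈ Icc (n ^ 2 - n) (n ^ 2)) :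
    NearMultiple ((q : ℤ) ^ (n * l + n)) (n * (q : ℤ) ^ (n * l - n))
      (blockSum q n - (q : ℤ) ^ (n * l)) := by
  rw [blockSum_eq_sum_Icc, ← add_sum_erase _ _ hl, add_sub_cancel_left]
  have h := nearMultiple_sum_mul_pow hq ((Icc (n ^ 2 - n) (n ^ 2)).erase l) (fun _ => 1) (n * ·)
    (e := n * l) (n := n) fun l' hl' => ?_
  · simp only [one_mul, abs_one, sum_const, nsmul_eq_mul, mul_one] at h
    refine h.mono (mul_le_mul_of_nonneg_right ?_ (by positivity))
    have hcard := card_filter_le ((Icc (n ^ 2 - n) (n ^ 2)).erase l) (fun l' => n * l' + n ≤ n * l)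
    rw [card_erase_of_mem hl, Nat.card_Icc] at hcard
    have hn : n ≤ n ^ 2 := Nat.le_self_pow two_ne_zero n
    exact_mod_cast hcard.trans (by omega)
  · rcases (ne_of_mem_erase hl').lt_or_gt with h | h
    · exact Or.inl (by rw [← mul_add_one]; exact Nat.mul_le_mul_left n h)
    · exact Or.inr (by rw [← mul_add_one]; exact Nat.mul_le_mul_left n h)

lemma cube_add_le {v n : ℕ} (hv : v < n) (hn : 3 ≤ n) : v ^ 3 + v + n + n ^ 2 ≤ n ^ 3 := by
  obtain ⟨w, rfl⟩ := Nat.exists_eq_add_of_lt hv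
  ring_nf
  nlinarith [sq_nonneg v, sq_nonneg w, mul_nonneg (Nat.zero_le v) (Nat.zero_le w)]

lemma abs_sum_mul_blockSum_le {q n e : ℕ} (hq : 2 ≤ q) (hn : 3 ≤ n)
    (he : n * (n ^ 2 - n) ≤ e) (c : ℕ → ℤ) :
    |∑ v ∈ range n, c v * blockSum q v| ≤ (∑ v ∈ range n, |c v|) * (q : ℤ) ^ (e - n) := by
  have hcube : n * (n ^ 2 - n) + n * n = n ^ 3 := by
    rw [← Nat.mul_add, Nat.sub_add_cancel (Nat.le_self_pow two_ne_zero n)]; ring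
  have hsq : n ^ 2 = n * n := sq n
  refine (abs_sum_le_sum_abs _ _).trans ?_
  rw [sum_mul]
  refine sum_le_sum fun v hv => ?_
  rw [abs_mul, abs_of_nonneg (blockSum_nonneg q v)]
  refine mul_le_mul_of_nonneg_left ((blockSum_le hq v).trans (pow_le_pow_right₀ ?_ ?_))
    (abs_nonneg _)
  · exact_mod_cast one_le_two.trans hq
  · have := cube_add_le (mem_range.1 hv) hn
    omega

lemma exists_mem_Icc_nearMultiple_sum_pow {ι : Type*} {q n : ℕ} (hq : 1 ≤ q) (hn : 0 < n)
    (E : Finset ι) (ε : ι → ℤ) (hε : ∀ i ∈ E, |ε i| ≤ 1) (α : ι → ℕ)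
    (hE : 2 * #{i ∈ E | α i < 2 * n ^ 3} ≤ n) :
    ∃ l ∈ Icc (n ^ 2 - n) (n ^ 2), NearMultiple ((q : ℤ) ^ (n * l + n))
      (#{i ∈ E | α i < 2 * n ^ 3} * (q : ℤ) ^ (n * l - n)) (∑ i ∈ E, ε i * (q : ℤ) ^ α i) := by
  set E' := {i ∈ E | α i < 2 * n ^ 3}
  have hn2 : n ≤ n ^ 2 := Nat.le_self_pow two_ne_zero n
  have hn3 : n ≤ n ^ 3 := Nat.le_self_pow three_ne_zero n
  obtain ⟨l, hl, hfar⟩ := exists_mem_forall_far hn (E'.image α) (Icc (n ^ 2 - n) (n ^ 2))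
    (by have := card_image_le (s := E') (f := α); rw [Nat.card_Icc]; omega)
  have hl3 : n * l ≤ n ^ 3 := (Nat.mul_le_mul_left n (mem_Icc.1 hl).2).trans_eq (by ring)
  refine ⟨l, hl, (nearMultiple_sum_mul_pow hq E ε α fun i hi => ?_).mono
    (mul_le_mul_of_nonneg_right ?_ (by positivity))⟩
  · by_cases hi' : α i < 2 * n ^ 3
    · exact hfar _ (mem_image_of_mem α (mem_filter.2 ⟨hi, hi'⟩))
    · right; omega
  · calc ∑ i ∈ E with α i + n ≤ n * l, |ε i| ≤ ∑ i ∈ E with α i + n ≤ n * l, 1 :=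
          sum_le_sum fun i hi => hε i (mem_filter.1 hi).1
      _ = #{i ∈ E | α i + n ≤ n * l} := by simp
      _ ≤ #E' := by exact_mod_cast card_le_card (monotone_filter_right E fun i _ h => by omega)

theorem ne_sum_of_top_level {ι : Type*} {γ q n : ℕ} (hq : 2 ≤ q) (hn : 6 ≤ n) {g : ℤ}
    (hg : |g| ≤ n) (hγ : γ ≤ n) (c : ℕ → ℤ) (hcn : c n ≠ 0)
    (hc : 2 * ∑ v ∈ range (n + 1), |c v| ≤ n) (E : Finset ι) (ε : ι → ℤ)
    (hε : ∀ i ∈ E, |ε i| ≤ 1) (α : ι → ℕ) (hE : 2 * #{i ∈ E | α i < 2 * n ^ 3} ≤ n) :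
    g ≠ ∑ v ∈ range (n + 1), c v * (γ + blockSum q v) + ∑ i ∈ E, ε i * (q : ℤ) ^ α i := by
  intro hgeq
  obtain ⟨l, hl, hEv⟩ :=
    exists_mem_Icc_nearMultiple_sum_pow (q := q) (by omega) (by omega) E ε hε α hE
  have hR' : 2 * ((#{i ∈ E | α i < 2 * n ^ 3} : ℕ) : ℤ) ≤ n := by exact_mod_cast hE
  have hc' : 2 * (∑ v ∈ range n, |c v| + |c n|) ≤ n := by rwa [← sum_range_succ]
  set e := n * l
  set R : ℤ := ((#{i ∈ E | α i < 2 * n ^ 3} : ℕ) : ℤ)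
  set Q := ∑ v ∈ range n, |c v|
  set t := ∑ v ∈ range (n + 1), c v with ht
  have he : n * (n ^ 2 - n) ≤ e := Nat.mul_le_mul_left n (mem_Icc.1 hl).1
  have h2n : n * 2 ≤ n * (n ^ 2 - n) :=
    Nat.mul_le_mul_left n (Nat.le_sub_of_add_le (by nlinarith))
  set a : ℤ := (q : ℤ) ^ (e - n)
  have hqn : ((n : ℤ) + 1) ^ 2 < (q : ℤ) ^ n := by exact_mod_cast succ_sq_lt_pow hq hn
  have hqa : (q : ℤ) ^ n ≤ a := pow_le_pow_right₀ (by exact_mod_cast one_le_two.trans hq) (by omega)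
  have hae : (q : ℤ) ^ n * a = (q : ℤ) ^ e := by rw [← pow_add]; congr 1; omega
  have hT : NearMultiple ((q : ℤ) ^ (e + n)) (n * a) (blockSum q n - (q : ℤ) ^ e) :=
    nearMultiple_blockSum_sub_pow (by omega) hl
  have hR : NearMultiple ((q : ℤ) ^ (e + n)) (Q * a) (∑ v ∈ range n, c v * blockSum q v) :=
    .of_abs_le (abs_sum_mul_blockSum_le hq (by omega) he c)
  have hh : NearMultiple ((q : ℤ) ^ (e + n)) a (g - t * γ) := by
    refine .of_abs_le (((abs_sub g _).trans_eq (by rw [abs_mul, Nat.abs_cast])).trans ?_)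
    have : (γ : ℤ) ≤ n := by exact_mod_cast hγ
    nlinarith [abs_nonneg t, abs_sum_le_sum_abs c (range (n + 1))]
  have hsplit : c n * (q : ℤ) ^ e = (g - t * γ) - c n * (blockSum q n - (q : ℤ) ^ e)
      - ∑ v ∈ range n, c v * blockSum q v - ∑ i ∈ E, ε i * (q : ℤ) ^ α i := by
    rw [hgeq, ht, sum_range_succ, sum_range_succ]
    simp only [mul_add, sum_add_distrib, ← sum_mul]
    ring
  have key := (((hh.sub (hT.mul_left (c n))).sub hR).sub hEv).mono
    (le_of_eq (by ring : _ = (1 + |c n| * n + Q + R) * a))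
  rw [← hsplit] at key
  have hQ : 0 ≤ Q := sum_nonneg fun v _ => abs_nonneg (c v)
  have hcoef : 1 + |c n| * n + Q + R < (q : ℤ) ^ n := by nlinarith [abs_nonneg (c n)]
  have hM : (1 + |c n| * n + Q + R) * a < (q : ℤ) ^ e :=
    hae ▸ mul_lt_mul_of_pos_right hcoef (by positivity)
  have hcn1 : |c n| + 1 ≤ (q : ℤ) ^ n := by nlinarith
  refine hcn (key.eq_zero_of_mul hM ?_)
  rw [pow_add]
  nlinarith [mul_le_mul_of_nonneg_left hcn1 (by positivity : (0 : ℤ) ≤ (q : ℤ) ^ e)]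

lemma eq_zero_of_eq_sum_pow {ι : Type*} {q K : ℕ} (hq : 2 ≤ q) {g : ℤ} (hg : |g| < 2 ^ K)
    (E : Finset ι) (w : ι → ℤ) (α : ι → ℕ) (hα : ∀ i ∈ E, K ≤ α i)
    (h : g = ∑ i ∈ E, w i * (q : ℤ) ^ α i) : g = 0 :=
  Int.eq_zero_of_abs_lt_dvd
    (h ▸ dvd_sum fun i hi => dvd_mul_of_dvd_right (pow_dvd_pow _ (hα i hi)) _)
    (hg.trans_le (pow_le_pow_left₀ (by norm_num) (by exact_mod_cast hq) K))

/-- The coefficient of `d (2v - 1) = γ + blockSum q v` once the odd terms are collected. -/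
def oddLevelCoeff {ι : Type*} (s : Finset ι) (ε : ι → ℤ) (k : ι → ℕ) (v : ℕ) : ℤ :=
  ∑ i ∈ {i ∈ s | k i % 2 = 1} with (k i + 1) / 2 = v, ε i

lemma two_mul_sum_abs_oddLevelCoeff_le {C n : ℕ} (hC : 4 ≤ C) (hn : 4 ≤ n) (s : Finset ℕ)
    (ε : ℕ → ℤ) (hε : ∀ i ∈ s, |ε i| ≤ 1) (k : ℕ → ℕ) (hk : ∀ i ∈ s, C * (i + 1) ^ 6 ≤ k i) :
    2 * ∑ v ∈ range (n + 1), |oddLevelCoeff s ε k v| ≤ n := by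
  have hn3 : n ≤ n ^ 3 := Nat.le_self_pow three_ne_zero n
  have hsub : {i ∈ {i ∈ s | k i % 2 = 1} | (k i + 1) / 2 ∈ range (n + 1)} ⊆
      {i ∈ s | k i ≤ 4 * n ^ 3} := by
    intro i hi
    simp only [mem_filter, mem_range] at hi ⊢
    exact ⟨hi.1.1, by omega⟩
  calc 2 * ∑ v ∈ range (n + 1), |oddLevelCoeff s ε k v|
      ≤ 2 * (#{i ∈ s | k i ≤ 4 * n ^ 3} : ℤ) := by
        gcongr
        exact (sum_abs_sum_fiber_le_card _ _ (fun i => (k i + 1) / 2) ε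
          fun i hi => hε i (mem_filter.1 hi).1).trans (by exact_mod_cast card_le_card hsub)
    _ ≤ n := by exact_mod_cast two_mul_card_filter_le hC hn s k hk

lemma sum_mul_dZ_eq {ι : Type*} {γ q : ℕ} (s : Finset ι) (ε : ι → ℤ) (k : ι → ℕ) {N : ℕ}
    (hN : ∀ i ∈ s, k i < N) :
    ∑ i ∈ s, ε i * dZ γ q (k i) = ∑ v ∈ range N, oddLevelCoeff s ε k v * (γ + blockSum q v)
      + ∑ i ∈ s with ¬ k i % 2 = 1, ε i * (q : ℤ) ^ (k i / 2) := by
  rw [← sum_filter_add_sum_filter_not s (fun i => k i % 2 = 1)]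
  congr 1
  · rw [← sum_fiberwise_of_maps_to (t := range N) (g := fun i => (k i + 1) / 2) fun i hi => ?_]
    · refine sum_congr rfl fun v _ => ?_
      rw [oddLevelCoeff, sum_mul]
      refine sum_congr rfl fun i hi => ?_
      obtain ⟨hodd, rfl⟩ := mem_filter.1 hi
      rw [dZ_of_odd (mem_filter.1 hodd).2]
    · have := hN i (mem_filter.1 hi).1
      exact mem_range.2 (by omega)
  · exact sum_congr rfl fun i hi => by rw [dZ_of_not_odd (mem_filter.1 hi).2]

theorem exists_strictMono_notMem_tailSums_dZ (γ : ℕ) {q : ℕ} (hq : 2 ≤ q) {g : ℤ}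
    (hg : g ≠ 0) : ∃ f : ℕ → ℕ, StrictMono f ∧ g ∉ tailSums (dZ γ q) f := by
  set K := γ + g.natAbs + 6
  refine ⟨fun i => 2 * K * (i + 1) ^ 6, fun a b hab => by dsimp only; gcongr, fun hmem => ?_⟩
  obtain ⟨m, ε, k, hεk, hgeq⟩ := exists_sum_zsmul_of_mem_tailSums hmem
  have hε : ∀ i ∈ range m, |ε i| ≤ 1 := fun i hi => (hεk i hi).1
  have hk : ∀ i ∈ range m, 2 * K * (i + 1) ^ 6 ≤ k i := fun i hi => (hεk i hi).2
  have hkK : ∀ i ∈ range m, 2 * K ≤ k i := fun i hi =>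
    (Nat.le_mul_of_pos_right _ (by positivity)).trans (hk i hi)
  have hgK : |g| ≤ K := by rw [Int.abs_eq_natAbs]; omega
  obtain ⟨N, hN⟩ : ∃ N, ∀ i ∈ range m, k i < N :=
    ⟨(range m).sup k + 1, fun i hi => Nat.lt_succ_of_le (le_sup hi)⟩
  simp only [smul_eq_mul] at hgeq
  rw [sum_mul_dZ_eq _ _ _ hN] at hgeq
  set c := oddLevelCoeff (range m) ε k
  by_cases hc : ∀ v ∈ range N, c v = 0
  · rw [sum_eq_zero fun v hv => by rw [hc v hv, zero_mul], zero_add] at hgeq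
    refine hg (eq_zero_of_eq_sum_pow (K := K) hq ?_ _ _ _ (fun i hi => ?_) hgeq)
    · rw [Int.abs_eq_natAbs]
      exact_mod_cast g.natAbs.lt_two_pow_self.trans_le (Nat.pow_le_pow_right two_pos (by omega))
    · have := hkK i (mem_filter.1 hi).1
      omega
  push Not at hc
  obtain ⟨n, hnS, hmax⟩ := exists_max_image {v ∈ range N | c v ≠ 0} id (filter_nonempty_iff.2 hc)
  obtain ⟨hnN, hcn⟩ := mem_filter.1 hnS
  have hnK : K ≤ n := by
    obtain ⟨i, hi, -⟩ := exists_ne_zero_of_sum_ne_zero hcn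
    obtain ⟨hodd, hin⟩ := mem_filter.1 hi
    have := hkK i (mem_filter.1 hodd).1
    omega
  have htop : ∑ v ∈ range N, c v * (γ + blockSum q v)
      = ∑ v ∈ range (n + 1), c v * (γ + blockSum q v) := by
    refine (sum_subset (range_subset_range.2 (mem_range.1 hnN)) fun v hv hv' => ?_).symm
    have hvn : n < v := by simpa using hv'
    rw [by_contra fun h => not_le.2 hvn (hmax v (mem_filter.2 ⟨hv, h⟩)), zero_mul]
  have hn3 : n ≤ n ^ 3 := Nat.le_self_pow three_ne_zero n
  refine ne_sum_of_top_level (γ := γ) hq (by omega) (hgK.trans (by exact_mod_cast hnK)) (by omega)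
    c hcn (two_mul_sum_abs_oddLevelCoeff_le (by omega) (by omega) _ ε hε k hk)
    {i ∈ range m | ¬ k i % 2 = 1} ε (fun i hi => hε i (mem_filter.1 hi).1) (k · / 2) ?_
    (by rw [hgeq, htop])
  refine le_trans (Nat.mul_le_mul_left 2 (card_le_card fun i hi => ?_))
    (two_mul_card_filter_le (C := 2 * K) (by omega) (by omega) (range m) k hk)
  simp only [mem_filter, mem_range] at hi ⊢
  omega

theorem statement12_general (γ q : ℕ) (hq : 1 < q) :
    ∃ τ : TopologicalSpace ℤ, @IsTopologicalAddGroup ℤ τ _ ∧ @T2Space ℤ τ ∧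
      Filter.Tendsto (dZ γ q) Filter.atTop (@nhds ℤ τ 0) :=
  isTSequence_of_forall_notMem_tailSums fun _ hg =>
    exists_strictMono_notMem_tailSums_dZ γ hq hg

/-- For positive integers `γ ≥ 1` and `q > 1`, `d` is a `T`-sequence in `ℤ`: there is a
Hausdorff group topology on `ℤ` in which `d n → 0`. -/
theorem statement12 (γ q : ℕ) (hγ : 1 ≤ γ) (hq : 1 < q) :
    ∃ τ : TopologicalSpace ℤ, @IsTopologicalAddGroup ℤ τ _ ∧ @T2Space ℤ τ ∧
      Filter.Tendsto (dZ γ q) Filter.atTop (@nhds ℤ τ 0) :=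
  statement12_general γ q hq
end
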